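/- If H ⊆ Kⁿ is the common zero set of an ideal of K[X₁, …, Xₙ] and H is a subgroup of the additive group (Kⁿ, +), then H is a K-linear subspace of Kⁿ; that is, H is also closed under multiplication by every scalar of K. -/

import Mathlib

/-! Restricting a polynomial `f` of the ideal to the line through a point `a ∈ H` gives the
one-variable polynomial `t ↦ f (t • a)`. As `H` contains `0` and is closed under addition, it
contains every `m • a` with `m ∈ ℕ`, so this polynomial has infinitely many roots in characteristic
zero; hence it is zero and `f` vanishes on the whole line. -/

namespace MvPolynomial

variable {σ R : Type*} [CommRing R]

noncomputable def restrictLine (a : σ → R) : MvPolynomial σ R →ₐ[R] Polynomial R :=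
  aeval fun i => Polynomial.C (a i) * Polynomial.X

theorem eval_restrictLine (a : σ → R) (f : MvPolynomial σ R) (t : R) :
    (restrictLine a f).eval t = eval (t • a) f := by
  rw [restrictLine, ← Polynomial.coe_evalRingHom, aeval_def, eval₂_comp_left]
  show _ = eval₂ (RingHom.id R) (t • a) f
  congr 1
  · ext; simp
  · funext i
    simp only [Function.comp_apply, Polynomial.coe_evalRingHom, Polynomial.eval_mul,
      Polynomial.eval_C, Polynomial.eval_X, Pi.smul_apply, smul_eq_mul]
    exact mul_comm _ _

theorem eval_smul_eq_zero_of_forall_natCast [IsDomain R] [CharZero R] {f : MvPolynomial σ R}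
    {a : σ → R} (h : ∀ m : ℕ, eval ((m : R) • a) f = 0) (c : R) : eval (c • a) f = 0 := by
  have hroots : {t : R | (restrictLine a f).IsRoot t}.Infinite :=
    Set.infinite_of_injective_forall_mem Nat.cast_injective fun m => by
      rw [Set.mem_ofPred_eq, Polynomial.IsRoot.def, eval_restrictLine]
      exact h m
  rw [← eval_restrictLine, Polynomial.eq_zero_of_infinite_isRoot _ hroots, Polynomial.eval_zero]

end MvPolynomial

theorem algebraic_subgroup_of_vector_group_is_linear_general {K : Type*} [Field K]
    [CharZero K] {n : ℕ} (I : Ideal (MvPolynomial (Fin n) K)) (H : Set (Fin n → K))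
    (hH : H = {a : Fin n → K | ∀ f ∈ I, MvPolynomial.eval a f = 0})
    (h0 : (0 : Fin n → K) ∈ H)
    (hadd : ∀ a ∈ H, ∀ b ∈ H, a + b ∈ H) :
    ∀ c : K, ∀ a ∈ H, c • a ∈ H := by
  intro c a ha
  let S : AddSubmonoid (Fin n → K) :=
    { carrier := H, zero_mem' := h0, add_mem' := fun {a b} ha hb => hadd a ha b hb }
  have hnat (m : ℕ) : (m : K) • a ∈ H := by
    rw [Nat.cast_smul_eq_nsmul]
    exact S.nsmul_mem ha m
  subst hH
  exact fun f hf => MvPolynomial.eval_smul_eq_zero_of_forall_natCast (fun m => hnat m f hf) c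

/-- Let `K` be an algebraically closed field of characteristic zero and let
`H ⊆ Kⁿ` be the common zero set of an ideal `I ⊆ K[X₁, …, Xₙ]`. If `H` is a subgroup of
the additive group `(Kⁿ, +)`, then `H` is a `K`-linear subspace of `Kⁿ`, i.e. `H` is also
closed under multiplication by every scalar of `K`. -/
theorem algebraic_subgroup_of_vector_group_is_linear {K : Type*} [Field K] [IsAlgClosed K]
    [CharZero K] {n : ℕ} (I : Ideal (MvPolynomial (Fin n) K)) (H : Set (Fin n → K))
    (hH : H = {a : Fin n → K | ∀ f ∈ I, MvPolynomial.eval a f = 0})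
    (h0 : (0 : Fin n → K) ∈ H)
    (hadd : ∀ a ∈ H, ∀ b ∈ H, a + b ∈ H)
    (hneg : ∀ a ∈ H, -a ∈ H) :
    ∀ c : K, ∀ a ∈ H, c • a ∈ H :=
  algebraic_subgroup_of_vector_group_is_linear_general I H hH h0 hadd
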